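/- arXiv:2110.07985 — 2 statements merged into one kernel-verified Lean document; each statement's English description precedes it below -/
import Mathlib

section
/- Consider deterministic dynamics f : S × A → S, a deterministic policy π : S → A, a bounded reward r : S × A → ℝ and γ ∈ [0,1]. Let (x̂_t) be a trajectory of f under π from x̂_0, and let (x_t) be the OPC rollout x_{t+1} = x̂_{t+1} + f̃(x_t, π(x_t)) - f̃(x̂_t, π(x̂_t)) with x_0 = x̂_0 for an arbitrary model f̃. Then the discounted returns coincide: ∑_{t=0}^{T} γ^t r(x_t, π(x_t)) = ∑_{t=0}^{T} γ^t r(x̂_t, π(x̂_t)). -/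
/-- Lemma 1 (deterministic version): with a deterministic policy and
deterministic environment, the OPC rollout achieves the same discounted
return as the reference trajectory, for any model `ftilde`. -/
theorem opc_deterministic_return (n m : ℕ)
    (f ftilde : EuclideanSpace ℝ (Fin n) → EuclideanSpace ℝ (Fin m) → EuclideanSpace ℝ (Fin n))
    (π : EuclideanSpace ℝ (Fin n) → EuclideanSpace ℝ (Fin m))
    (r : EuclideanSpace ℝ (Fin n) → EuclideanSpace ℝ (Fin m) → ℝ) (R : ℝ)
    (hbound : ∀ s a, |r s a| ≤ R)
    (γ : ℝ) (hγ0 : 0 ≤ γ) (hγ1 : γ ≤ 1)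
    (xhat x : ℕ → EuclideanSpace ℝ (Fin n)) (T : ℕ)
    (href : ∀ t, xhat (t + 1) = f (xhat t) (π (xhat t)))
    (hopc : ∀ t, x (t + 1) = xhat (t + 1) + ftilde (x t) (π (x t)) - ftilde (xhat t) (π (xhat t)))
    (h0 : x 0 = xhat 0) :
    ∑ t ∈ Finset.range (T + 1), γ ^ t * r (x t) (π (x t)) =
      ∑ t ∈ Finset.range (T + 1), γ ^ t * r (xhat t) (π (xhat t)) := by
  have h : ∀ t, x t = xhat t := by
    intro t
    induction t with
    | zero => exact h0
    | succ k ih => rw [hopc k, ih]; abel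
  simp [h]
end

section
/- Let p₁, p₂ be probability measures on ℝⁿ and q a probability measure on ℝᵐ with finite second moments. Then W₂(p₁ ⊗ q, p₂ ⊗ q) = W₂(p₁, p₂), where ⊗ denotes the product measure on ℝⁿ × ℝᵐ with the Euclidean norm. -/
/-
Given a coupling `γ` of `p₁` and `p₂`, sampling `(x, y) ~ γ` and `a ~ q` and pairing both points
with the same `a` gives a coupling of `p₁ ⊗ q` and `p₂ ⊗ q` with the same cost, so
`W₂(p₁ ⊗ q, p₂ ⊗ q) ≤ W₂(p₁, p₂)`. Conversely, the first components of any coupling of `p₁ ⊗ q`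
and `p₂ ⊗ q` form a coupling of `p₁` and `p₂` whose cost is at most the full cost; the second
moment of `q` makes the discarded term integrable.
-/

open MeasureTheory

/-- The 2-Wasserstein distance, defined via couplings. -/
noncomputable def W2 {X : Type*} [MetricSpace X] [MeasurableSpace X]
    (ν μ : Measure X) : ℝ :=
  sInf {c : ℝ | ∃ γ : Measure (X × X), γ.fst = ν ∧ γ.snd = μ ∧
    c = (∫ z, dist z.1 z.2 ^ (2 : ℝ) ∂γ) ^ ((1 : ℝ) / 2)}

/-- The 2-Wasserstein distance on the product space `ℝⁿ × ℝᵐ` with the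
Euclidean cost `‖(x,y)‖² = ‖x‖² + ‖y‖²`, defined via couplings. -/
noncomputable def W2prod {n m : ℕ}
    (μ ν : Measure (EuclideanSpace ℝ (Fin n) × EuclideanSpace ℝ (Fin m))) : ℝ :=
  sInf {c : ℝ | ∃ γ, γ.fst = μ ∧ γ.snd = ν ∧
    c = (∫ z : (EuclideanSpace ℝ (Fin n) × EuclideanSpace ℝ (Fin m)) ×
            (EuclideanSpace ℝ (Fin n) × EuclideanSpace ℝ (Fin m)),
          (‖z.1.1 - z.2.1‖ ^ 2 + ‖z.1.2 - z.2.2‖ ^ 2) ∂γ) ^ ((1 : ℝ) / 2)}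

namespace MeasureTheory.Measure

variable {X Y X' Y' : Type*} [MeasurableSpace X] [MeasurableSpace Y]
  [MeasurableSpace X'] [MeasurableSpace Y']

lemma isProbabilityMeasure_of_fst_eq {ρ : Measure (X × Y)} {μ : Measure X}
    [IsProbabilityMeasure μ] (h : ρ.fst = μ) : IsProbabilityMeasure ρ :=
  ⟨by rw [← fst_univ, h, measure_univ]⟩

lemma fst_map_prodMap {ρ : Measure (X × Y)} {f : X → X'} {g : Y → Y'}
    (hf : Measurable f) (hg : Measurable g) : (ρ.map (Prod.map f g)).fst = ρ.fst.map f :=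
  (fst_map_prodMk (hg.comp measurable_snd)).trans (map_map hf measurable_fst).symm

lemma snd_map_prodMap {ρ : Measure (X × Y)} {f : X → X'} {g : Y → Y'}
    (hf : Measurable f) (hg : Measurable g) : (ρ.map (Prod.map f g)).snd = ρ.snd.map g :=
  (snd_map_prodMk (hf.comp measurable_fst)).trans (map_map hg measurable_snd).symm

noncomputable def prodDiag (γ : Measure (X × X)) (ν : Measure Y) : Measure ((X × Y) × (X × Y)) :=
  (γ.prod ν).map fun w => ((w.1.1, w.2), (w.1.2, w.2))

variable {γ : Measure (X × X)} {ν : Measure Y} [SFinite γ] [SFinite ν]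

lemma fst_prodDiag : (γ.prodDiag ν).fst = γ.fst.prod ν := by
  rw [prodDiag, fst_map_prodMk (by fun_prop)]
  conv_rhs => rw [fst, ← map_id (μ := ν), map_prod_map _ _ measurable_fst measurable_id]
  rfl

lemma snd_prodDiag : (γ.prodDiag ν).snd = γ.snd.prod ν := by
  rw [prodDiag, snd_map_prodMk (by fun_prop)]
  conv_rhs => rw [snd, ← map_id (μ := ν), map_prod_map _ _ measurable_snd measurable_id]
  rfl

end MeasureTheory.Measure

lemma integral_le_integral_add_of_integrable_right {α : Type*} [MeasurableSpace α]
    {μ : Measure α} {f g : α → ℝ} (hf : 0 ≤ f) (hg : 0 ≤ g) (hgi : Integrable g μ) :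
    ∫ a, f a ∂μ ≤ ∫ a, f a + g a ∂μ := by
  by_cases hfi : Integrable f μ
  · rw [integral_add hfi hgi]
    linarith [integral_nonneg (μ := μ) hg]
  · rw [integral_undef hfi]
    exact integral_nonneg fun a => add_nonneg (hf a) (hg a)

lemma integrable_norm_sub_sq_of_memLp {E : Type*} [NormedAddCommGroup E] [MeasurableSpace E]
    [BorelSpace E] [SecondCountableTopology E] {ρ : Measure (E × E)}
    (h₁ : MemLp id 2 ρ.fst) (h₂ : MemLp id 2 ρ.snd) :
    Integrable (fun z => ‖z.1 - z.2‖ ^ 2) ρ := by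
  have hfst : MemLp Prod.fst 2 ρ := h₁.comp_of_map measurable_fst.aemeasurable
  have hsnd : MemLp Prod.snd 2 ρ := h₂.comp_of_map measurable_snd.aemeasurable
  exact (hfst.sub hsnd).integrable_norm_pow two_ne_zero

lemma dist_rpow_two_eq_norm_sub_sq {E : Type*} [NormedAddCommGroup E] (x y : E) :
    dist x y ^ (2 : ℝ) = ‖x - y‖ ^ 2 := by
  rw [Real.rpow_two, dist_eq_norm]

section Euclidean

variable {n m : ℕ} (p₁ p₂ : Measure (EuclideanSpace ℝ (Fin n)))
  (q : Measure (EuclideanSpace ℝ (Fin m)))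

lemma W2prod_prod_le_W2 [IsProbabilityMeasure p₁] [IsProbabilityMeasure p₂]
    [IsProbabilityMeasure q] : W2prod (p₁.prod q) (p₂.prod q) ≤ W2 p₁ p₂ := by
  refine csInf_le_csInf ⟨0, ?_⟩ ⟨_, p₁.prod p₂, Measure.fst_prod, Measure.snd_prod, rfl⟩ ?_
  · rintro _ ⟨Γ, -, -, rfl⟩
    positivity
  · rintro _ ⟨γ, h₁, h₂, rfl⟩
    have := Measure.isProbabilityMeasure_of_fst_eq h₁
    refine ⟨γ.prodDiag q, by rw [Measure.fst_prodDiag, h₁], by rw [Measure.snd_prodDiag, h₂], ?_⟩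
    rw [Measure.prodDiag, integral_map (by fun_prop) (by fun_prop)]
    simp only [sub_self, norm_zero, zero_pow two_ne_zero, add_zero, dist_rpow_two_eq_norm_sub_sq]
    rw [integral_fun_fst (fun z : _ × _ => ‖z.1 - z.2‖ ^ 2), probReal_univ, one_smul]

lemma W2_le_W2prod_prod [IsProbabilityMeasure p₁] [IsProbabilityMeasure p₂]
    [IsProbabilityMeasure q] (hq : MemLp id 2 q) :
    W2 p₁ p₂ ≤ W2prod (p₁.prod q) (p₂.prod q) := by
  refine le_csInf ⟨_, (p₁.prod q).prod (p₂.prod q), Measure.fst_prod, Measure.snd_prod, rfl⟩ ?_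
  rintro _ ⟨Γ, h₁, h₂, rfl⟩
  have hsecond : Integrable (fun z => ‖z.1.2 - z.2.2‖ ^ 2) Γ := by
    have hmarg₁ : (Γ.map (Prod.map Prod.snd Prod.snd)).fst = q := by
      rw [Measure.fst_map_prodMap measurable_snd measurable_snd, h₁]
      exact Measure.snd_prod
    have hmarg₂ : (Γ.map (Prod.map Prod.snd Prod.snd)).snd = q := by
      rw [Measure.snd_map_prodMap measurable_snd measurable_snd, h₂]
      exact Measure.snd_prod
    have := integrable_norm_sub_sq_of_memLp (hmarg₁ ▸ hq) (hmarg₂ ▸ hq)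
    exact (integrable_map_measure (by fun_prop) (by fun_prop)).mp this
  have hcoupling : (Γ.map (Prod.map Prod.fst Prod.fst)).fst = p₁ ∧
      (Γ.map (Prod.map Prod.fst Prod.fst)).snd = p₂ := by
    rw [Measure.fst_map_prodMap measurable_fst measurable_fst, h₁,
      Measure.snd_map_prodMap measurable_fst measurable_fst, h₂]
    exact ⟨Measure.fst_prod, Measure.fst_prod⟩
  calc W2 p₁ p₂
      ≤ (∫ z, dist z.1 z.2 ^ (2 : ℝ) ∂(Γ.map (Prod.map Prod.fst Prod.fst))) ^ ((1 : ℝ) / 2) := by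
        refine csInf_le ⟨0, ?_⟩ ⟨_, hcoupling.1, hcoupling.2, rfl⟩
        rintro _ ⟨γ, -, -, rfl⟩
        positivity
    _ ≤ _ := by
        refine Real.rpow_le_rpow (by positivity) ?_ (by norm_num)
        simp only [dist_rpow_two_eq_norm_sub_sq]
        rw [integral_map (by fun_prop) (by fun_prop)]
        simp only [Prod.map_fst, Prod.map_snd]
        exact integral_le_integral_add_of_integrable_right (fun _ => by positivity)
          (fun _ => by positivity) hsecond

end Euclidean

theorem W2_prod_eq_general (n m : ℕ)
    (p₁ p₂ : Measure (EuclideanSpace ℝ (Fin n)))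
    (q : Measure (EuclideanSpace ℝ (Fin m)))
    [IsProbabilityMeasure p₁] [IsProbabilityMeasure p₂] [IsProbabilityMeasure q]
    (hq : MemLp id 2 q) :
    W2prod (p₁.prod q) (p₂.prod q) = W2 p₁ p₂ :=
  (W2prod_prod_le_W2 p₁ p₂ q).antisymm (W2_le_W2prod_prod p₁ p₂ q hq)

/-- An identical independent component does not affect the 2-Wasserstein
distance: `W₂(p₁ ⊗ q, p₂ ⊗ q) = W₂(p₁, p₂)`. -/
theorem W2_prod_eq (n m : ℕ)
    (p₁ p₂ : Measure (EuclideanSpace ℝ (Fin n)))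
    (q : Measure (EuclideanSpace ℝ (Fin m)))
    [IsProbabilityMeasure p₁] [IsProbabilityMeasure p₂] [IsProbabilityMeasure q]
    (hp₁ : MemLp id 2 p₁) (hp₂ : MemLp id 2 p₂) (hq : MemLp id 2 q) :
    W2prod (p₁.prod q) (p₂.prod q) = W2 p₁ p₂ :=
  W2_prod_eq_general n m p₁ p₂ q hq
end
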